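/- arXiv:1009.2085 — 3 statements merged into one kernel-verified Lean document; each statement's English description precedes it below -/
import Mathlib

section
/- Let V_π be a Poisson spray on the Poisson manifold (M, π) with flow φ_t. Under the canonical identification T_{0_x}(T*M) ≅ T_x M ⊕ T*_x M, v ↦ (v̄, θ_v), the differential of the flow at a zero covector 0_x is (dφ_t)_{0_x} : (v̄, θ_v) ↦ (v̄ + t π♯(θ_v), θ_v). -/
/-!
Formalization framework for "On the existence of symplectic realizations"
(Crainic–Mărcuț).  We work on a chart: the Poisson manifold is an open set
`U ⊆ ℝⁿ` (with `Vec n := Fin n → ℝ`), its cotangent bundle is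
`T*U = U × ℝⁿ ⊆ Pt n := Vec n × Vec n`, with bundle projection `Prod.fst`.
A bivector field is given by its components `Pb x p q = π_{pq}(x)`, a classical
connection on `TM` by its Christoffel symbols `Γ x p q r = Γ_{pq}^r(x)`.
-/

noncomputable section
open Set

namespace PoissonPaper

abbrev Vec (n : ℕ) := Fin n → ℝ
abbrev Pt (n : ℕ) := Vec n × Vec n

variable {n : ℕ}

/-- Partial derivative `∂_l f (x)`. -/
def pd (l : Fin n) (f : Vec n → ℝ) (x : Vec n) : ℝ :=
  fderiv ℝ f x (Pi.single l 1)

/-- The bundle map `π♯ : T*M → TM`, `β(π♯ α) = π(α, β)`;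
in components `(π♯ ξ)_q = ∑_p π_{pq} ξ_p`. -/
def sharp (Pb : Vec n → Fin n → Fin n → ℝ) (x ξ : Vec n) : Vec n :=
  fun q => ∑ p, Pb x p q * ξ p

/-- The Jacobiator of the bivector `Pb` on the coordinate functions:
`{{x_j,x_k},x_i} + {{x_k,x_i},x_j} + {{x_i,x_j},x_k}`; `π` is Poisson iff it
vanishes. -/
def jacobiator (Pb : Vec n → Fin n → Fin n → ℝ) (x : Vec n) (i j k : Fin n) : ℝ :=
  ∑ l, (Pb x l i * pd l (fun y => Pb y j k) x
      + Pb x l j * pd l (fun y => Pb y k i) x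
      + Pb x l k * pd l (fun y => Pb y i j) x)

/-- Components of the Schouten bracket `[π, π]` (with the convention
`[π,π](df,dg,dh) = 2({f,{g,h}} + {g,{h,f}} + {h,{f,g}})`). -/
def schouten (Pb : Vec n → Fin n → Fin n → ℝ) (x : Vec n) (i j k : Fin n) : ℝ :=
  -(2 * jacobiator Pb x i j k)

/-- `Pb` is a smooth bivector field (an antisymmetric 2-tensor) on `U`. -/
def IsBivectorOn (U : Set (Vec n)) (Pb : Vec n → Fin n → Fin n → ℝ) : Prop :=
  (∀ p q, ContDiffOn ℝ (⊤ : ℕ∞) (fun x => Pb x p q) U) ∧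
  (∀ x ∈ U, ∀ p q, Pb x q p = - Pb x p q)

/-- `Pb` is a Poisson bivector on `U` : a bivector with `[π,π] = 0`
(the Jacobi identity). -/
def IsPoissonOn (U : Set (Vec n)) (Pb : Vec n → Fin n → Fin n → ℝ) : Prop :=
  IsBivectorOn U Pb ∧ ∀ x ∈ U, ∀ i j k, jacobiator Pb x i j k = 0

/-- A Poisson spray for `(U, π)`: a (smooth) vector field `V` on `T*U = U × ℝⁿ`
such that `(dp)_ξ(V_ξ) = π♯(ξ)` and `m_t^*(V) = t V` for all `t > 0`
(the latter written as `(dm_t)(t • V_ξ) = V(m_t ξ)`, where `m_t(x,y) = (x,t•y)`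
and `dm_t(v,θ) = (v, t•θ)`). -/
structure IsSpray (U : Set (Vec n)) (Pb : Vec n → Fin n → Fin n → ℝ)
    (V : Pt n → Pt n) : Prop where
  smooth : ContDiffOn ℝ (⊤ : ℕ∞) V (U ×ˢ (univ : Set (Vec n)))
  base : ∀ ξ : Pt n, ξ.1 ∈ U → (V ξ).1 = sharp Pb ξ.1 ξ.2
  homog : ∀ t : ℝ, 0 < t → ∀ ξ : Pt n, ξ.1 ∈ U →
    V (ξ.1, t • ξ.2) = (t • (V ξ).1, t • t • (V ξ).2)

/-- A local flow `φ` of the vector field `V` on `T*U = U × ℝⁿ ⊆ Pt n`, with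
open domain `D ⊆ ℝ × Pt n`. -/
structure IsLocalFlow (U : Set (Vec n)) (V : Pt n → Pt n)
    (D : Set (ℝ × Pt n)) (φ : ℝ → Pt n → Pt n) : Prop where
  isOpen_dom : IsOpen D
  mem_zero : ∀ ξ : Pt n, ξ.1 ∈ U → ((0 : ℝ), ξ) ∈ D
  init : ∀ ξ : Pt n, φ 0 ξ = ξ
  interval : ∀ (t : ℝ) (ξ : Pt n), (t, ξ) ∈ D → ∀ s ∈ uIcc (0:ℝ) t, (s, ξ) ∈ D
  invariant : ∀ (t : ℝ) (ξ : Pt n), (t, ξ) ∈ D → (φ t ξ).1 ∈ U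
  hasDeriv : ∀ (t : ℝ) (ξ : Pt n), (t, ξ) ∈ D →
    HasDerivAt (fun s => φ s ξ) (V (φ t ξ)) t
  group : ∀ (s t : ℝ) (ξ : Pt n), (t, ξ) ∈ D → (s, φ t ξ) ∈ D →
    (s + t, ξ) ∈ D ∧ φ s (φ t ξ) = φ (s + t) ξ

/-- The canonical symplectic form `ω_can = ∑ dx_i ∧ dy_i` of `T*ℝⁿ = ℝⁿ × ℝⁿ`
(constant coefficients): `ω_can(v, w) = ⟨θ_w, v̄⟩ - ⟨θ_v, w̄⟩`. -/
def omegaCan (v w : Pt n) : ℝ := ∑ i, (w.2 i * v.1 i - v.2 i * w.1 i)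

/-- The 2-form `ω := ∫₀¹ (φ_t)^* ω_can dt`. -/
def omegaInt (φ : ℝ → Pt n → Pt n) (ξ v w : Pt n) : ℝ :=
  ∫ t in (0:ℝ)..1, omegaCan (fderiv ℝ (φ t) ξ v) (fderiv ℝ (φ t) ξ w)

/-- Nondegeneracy of a 2-form at a point. -/
def Nondeg (ω : Pt n → Pt n → Pt n → ℝ) (ξ : Pt n) : Prop :=
  ∀ v : Pt n, (∀ w : Pt n, ω ξ v w = 0) → v = 0

/-- Closedness of a 2-form on `S` (`dω = 0`, expressed on constant vector
fields). -/
def ClosedOn (S : Set (Pt n)) (ω : Pt n → Pt n → Pt n → ℝ) : Prop :=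
  ∀ ξ ∈ S, ∀ u v w : Pt n,
    fderiv ℝ (fun η => ω η v w) ξ u - fderiv ℝ (fun η => ω η u w) ξ v
      + fderiv ℝ (fun η => ω η u v) ξ w = 0

/-- `ω` is a symplectic form on `S`: a smooth, bilinear, antisymmetric,
closed, nondegenerate 2-form. -/
def IsSymplecticOn (S : Set (Pt n)) (ω : Pt n → Pt n → Pt n → ℝ) : Prop :=
  (∀ ξ ∈ S, ∀ v w : Pt n, ω ξ w v = - ω ξ v w) ∧
  (∀ ξ ∈ S, ∀ (a b : ℝ) (v v' w : Pt n),
      ω ξ (a • v + b • v') w = a * ω ξ v w + b * ω ξ v' w) ∧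
  (∀ v w : Pt n, ContDiffOn ℝ (⊤ : ℕ∞) (fun ξ => ω ξ v w) S) ∧
  ClosedOn S ω ∧ (∀ ξ ∈ S, Nondeg ω ξ)

/-- The projection `p = Prod.fst : (S, ω) → (U, π)` is a Poisson map: for each
`ξ ∈ S` and `θ ∈ T*_{p(ξ)}M`, any `v` with `i_v ω = p^*θ` at `ξ` satisfies
`(dp)_ξ(v) = π♯(θ)`; i.e. the bivector inverse to `ω` pushes forward to `π`. -/
def FstIsPoissonMap (S : Set (Pt n)) (Pb : Vec n → Fin n → Fin n → ℝ)
    (ω : Pt n → Pt n → Pt n → ℝ) : Prop :=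
  ∀ ξ ∈ S, ∀ θ : Vec n, ∀ v : Pt n,
    (∀ w : Pt n, ω ξ v w = ∑ i, θ i * w.1 i) → v.1 = sharp Pb ξ.1 θ

/-- Lie bracket of vector fields on `ℝⁿ` (in components). -/
def lieVF (X Y : Vec n → Vec n) (x : Vec n) : Vec n :=
  fun q => ∑ p, (X x p * pd p (fun y => Y y q) x - Y x p * pd p (fun y => X y q) x)

/-- Lie derivative of a 1-form `β` along a vector field `X` (in components):
`(L_X β)_r = ∑_p (X_p ∂_p β_r + β_p ∂_r X_p)`. -/
def lieDer1 (X β : Vec n → Vec n) (x : Vec n) : Vec n :=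
  fun r => ∑ p, (X x p * pd p (fun y => β y r) x + β x p * pd r (fun y => X y p) x)

/-- The pairing `π(α, β)`. -/
def pbPair (Pb : Vec n → Fin n → Fin n → ℝ) (α β : Vec n → Vec n) (x : Vec n) : ℝ :=
  ∑ p, ∑ q, Pb x p q * α x p * β x q

/-- The Koszul bracket `[α, β]_π = L_{π♯α} β − L_{π♯β} α − d(π(α,β))` on
1-forms. -/
def koszul (Pb : Vec n → Fin n → Fin n → ℝ) (α β : Vec n → Vec n) (x : Vec n) :
    Vec n :=
  fun r => lieDer1 (fun y => sharp Pb y (α y)) β x r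
         - lieDer1 (fun y => sharp Pb y (β y)) α x r
         - pd r (pbPair Pb α β) x

/-- The Lie derivative `L_{π♯α}(f)` of a function along `π♯α`. -/
def LDer (Pb : Vec n → Fin n → Fin n → ℝ) (α : Vec n → Vec n) (f : Vec n → ℝ)
    (x : Vec n) : ℝ :=
  ∑ q, sharp Pb x (α x) q * pd q f x

/-- Classical covariant derivative of a 1-form `α` along a vector field `X`,
for the connection dual to the one on `TM` with Christoffel symbols `Γ`:
`(∇_X α)_q = ∑_p X_p ∂_p α_q − ∑_{p,r} Γ_{pq}^r X_p α_r`. -/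
def covD1 (Γ : Vec n → Fin n → Fin n → Fin n → ℝ) (X α : Vec n → Vec n)
    (x : Vec n) : Vec n :=
  fun q => (∑ p, X x p * pd p (fun y => α y q) x)
         - ∑ p, ∑ r, Γ x p q r * X x p * α x r

/-- The contravariant connection `∇̄` on `TM` induced by a classical connection:
`∇̄_α(V) = π♯(∇_V α) + [π♯α, V]`. -/
def nbarVF (Pb : Vec n → Fin n → Fin n → ℝ)
    (Γ : Vec n → Fin n → Fin n → Fin n → ℝ)
    (α X : Vec n → Vec n) (x : Vec n) : Vec n :=
  fun s => (∑ q, Pb x q s * covD1 Γ X α x q)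
         + lieVF (fun y => sharp Pb y (α y)) X x s

/-- The contravariant connection `∇̄` on `T*M` induced by a classical
connection: `∇̄_α(β) = ∇_{π♯β}(α) + [α, β]_π`. -/
def nbar1F (Pb : Vec n → Fin n → Fin n → ℝ)
    (Γ : Vec n → Fin n → Fin n → Fin n → ℝ)
    (α β : Vec n → Vec n) (x : Vec n) : Vec n :=
  fun r => covD1 Γ (fun y => sharp Pb y (β y)) α x r + koszul Pb α β x r

/-- Connection coefficients of `∇̄` on `TM`: `(∇̄_{dx_p} ∂_q)^r`. -/
def GbarTM (Pb : Vec n → Fin n → Fin n → ℝ)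
    (Γ : Vec n → Fin n → Fin n → Fin n → ℝ) (x : Vec n) (p q r : Fin n) : ℝ :=
  -(∑ s, Pb x s r * Γ x q s p) - pd q (fun y => Pb y p r) x

/-- Connection coefficients of `∇̄` on `T*M`: `(∇̄_{dx_p} dx_q)_r`. -/
def GbarT1 (Pb : Vec n → Fin n → Fin n → ℝ)
    (Γ : Vec n → Fin n → Fin n → Fin n → ℝ) (x : Vec n) (p q r : Fin n) : ℝ :=
  pd r (fun y => Pb y p q) x - ∑ s, Pb x q s * Γ x s r p

/-- Connection coefficients of the contravariant connection `∇_α := ∇_{π♯α}`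
on `T*M`: `(∇_{π♯ dx_p} dx_q)_r`. -/
def Gplain (Pb : Vec n → Fin n → Fin n → ℝ)
    (Γ : Vec n → Fin n → Fin n → Fin n → ℝ) (x : Vec n) (p q r : Fin n) : ℝ :=
  -(∑ s, Pb x p s * Γ x s r q)

/-- Derivative of a path `u` (of tangent or cotangent vectors) along a
cotangent path with covector components `a` over base path `γ`, for a
contravariant connection with coefficients `G` (so `(∇_a u)_r = u̇_r +
∑_{p,q} a_p u_q G_{pq}^r`). -/
def covAlong (G : Vec n → Fin n → Fin n → Fin n → ℝ) (a γ : ℝ → Vec n)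
    (u : ℝ → Vec n) (t : ℝ) : Vec n :=
  fun r => deriv (fun s => u s r) t + ∑ p, ∑ q, a t p * u t q * G (γ t) p q r

/-- Vertical component `θ_v = v − hor_ξ(v̄)` of a tangent vector
`v ∈ T_ξ(T*M)` with respect to the classical connection `Γ`. -/
def vert (Γ : Vec n → Fin n → Fin n → Fin n → ℝ) (ξ v : Pt n) : Vec n :=
  fun q => v.2 q - ∑ p, ∑ r, Γ ξ.1 p q r * v.1 p * ξ.2 r

/-- The horizontal subspace `H_ξ ⊆ T_ξ(T*M)` of the classical connection `Γ`. -/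
def Hor (Γ : Vec n → Fin n → Fin n → Fin n → ℝ) (ξ : Pt n) : Set (Pt n) :=
  {u : Pt n | ∀ q, u.2 q = ∑ p, ∑ r, Γ ξ.1 p q r * u.1 p * ξ.2 r}

/-- A contravariant connection on `T*M` over the Poisson manifold `(U, π)`:
a bilinear operation `(α, β) ↦ ∇_α β` on 1-forms, function-linear in `α` and
satisfying the Leibniz rule `∇_α(fβ) = f ∇_α β + L_{π♯α}(f) β`. -/
structure IsContraConn (U : Set (Vec n)) (Pb : Vec n → Fin n → Fin n → ℝ)
    (C : (Vec n → Vec n) → (Vec n → Vec n) → (Vec n → Vec n)) : Prop where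
  addLeft : ∀ (α α' β : Vec n → Vec n), ∀ x ∈ U,
    C (α + α') β x = C α β x + C α' β x
  addRight : ∀ (α β β' : Vec n → Vec n), ∀ x ∈ U,
    C α (β + β') x = C α β x + C α β' x
  smulLeft : ∀ f : Vec n → ℝ, ContDiffOn ℝ (⊤ : ℕ∞) f U →
    ∀ (α β : Vec n → Vec n), ∀ x ∈ U,
      C (fun y => f y • α y) β x = f x • C α β x
  leibniz : ∀ f : Vec n → ℝ, ContDiffOn ℝ (⊤ : ℕ∞) f U →
    ∀ (α β : Vec n → Vec n), ∀ x ∈ U,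
      C α (fun y => f y • β y) x = f x • C α β x + LDer Pb α f x • β x

/-- Christoffel symbols of a contravariant connection:
`∇_{dx_p}(dx_q) = ∑_r Γ_{pq}^r dx_r`. -/
def christ (C : (Vec n → Vec n) → (Vec n → Vec n) → (Vec n → Vec n))
    (x : Vec n) (p q r : Fin n) : ℝ :=
  C (fun _ => Pi.single p 1) (fun _ => Pi.single q 1) x r

/-- A smooth 1-form on `U` (in components). -/
def Smooth1F (U : Set (Vec n)) (α : Vec n → Vec n) : Prop :=
  ∀ q, ContDiffOn ℝ (⊤ : ℕ∞) (fun x => α x q) U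

/-- The pairing `g(α, β)` of a fiber metric on `T*M` with 1-forms. -/
def gPair (g : Vec n → Fin n → Fin n → ℝ) (α β : Vec n → Vec n) (x : Vec n) : ℝ :=
  ∑ p, ∑ q, g x p q * α x p * β x q

end PoissonPaper

/-!
A Poisson spray vanishes on the zero section, so `0_x` is an equilibrium of `V_π`, and the
differential of the time-`t` flow at an equilibrium is `exp (t A)`, `A` being the derivative of
the vector field there. Homogeneity of `V_π` in the fiber gives `A (v̄, θ) = (π♯ θ, 0)`, so
`A² = 0` and `exp (t A) = 1 + t A`.

The linearization at an equilibrium is a Grönwall argument: trajectories starting `δ`-close to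
the equilibrium stay `O(δ)`-close (a bootstrap keeps them in the ball where `‖V ξ‖ ≤ K ‖ξ - ξ₀‖`),
and on that ball `V` differs from `A` by `o(δ)`, so they differ from the linear flow by `o(δ)`.
-/

open Metric Filter Topology

section Linearization

variable {E : Type*} [NormedAddCommGroup E] [NormedSpace ℝ E]

theorem Icc_subset_preimage_of_bootstrap {X : Type*} [TopologicalSpace X] {c : ℝ → X}
    {a b : ℝ} (hc : ∀ u ∈ Icc a b, ContinuousAt c u) {s : Set X} (hs : IsClosed s)
    (ha : c a ∈ s) (step : ∀ u ∈ Ico a b, Icc a u ⊆ c ⁻¹' s → c u ∈ interior s) :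
    Icc a b ⊆ c ⁻¹' s := by
  have hclosed : IsClosed (c ⁻¹' s ∩ Icc a b) := by
    rw [inter_comm]
    exact ContinuousOn.preimage_isClosed_of_isClosed
      (fun u hu => (hc u hu).continuousWithinAt) isClosed_Icc hs
  refine hclosed.Icc_subset_of_forall_mem_nhdsGT_of_Icc_subset ha fun u hu hsub => ?_
  have hu : c ⁻¹' interior s ∈ 𝓝 u :=
    (hc u (Ico_subset_Icc_self hu)).preimage_mem_nhds (isOpen_interior.mem_nhds (step u hu hsub))
  exact mem_of_superset (mem_nhdsWithin_of_mem_nhds hu) (preimage_mono interior_subset)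

theorem gronwallBound_zero_eq_mul (K ε x : ℝ) :
    gronwallBound 0 K ε x = ε * gronwallBound 0 K 1 x := by
  simp only [gronwallBound]
  split_ifs <;> ring

theorem norm_trajectory_sub_le_mul_exp {W : E → E} {ξ₀ : E} {ρ K : ℝ} (hK : 0 ≤ K)
    (hW : ∀ ξ ∈ closedBall ξ₀ ρ, ‖W ξ‖ ≤ K * ‖ξ - ξ₀‖) {γ : ℝ → E}
    (hγ : ∀ u ∈ Icc (0 : ℝ) 1, HasDerivAt γ (W (γ u)) u)
    (hγ₀ : ‖γ 0 - ξ₀‖ * Real.exp K < ρ) :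
    ∀ u ∈ Icc (0 : ℝ) 1, ‖γ u - ξ₀‖ ≤ ‖γ 0 - ξ₀‖ * Real.exp K := by
  have gronwall : ∀ u ∈ Icc (0 : ℝ) 1, Icc 0 u ⊆ γ ⁻¹' closedBall ξ₀ ρ →
      ‖γ u - ξ₀‖ ≤ ‖γ 0 - ξ₀‖ * Real.exp K := by
    intro u hu hsub
    have hIcc : Icc 0 u ⊆ Icc (0 : ℝ) 1 := Icc_subset_Icc_right hu.2
    have := norm_le_gronwallBound_of_norm_deriv_right_le (f := fun r => γ r - ξ₀)
      (ε := 0) (fun r hr => (hγ r (hIcc hr)).continuousAt.continuousWithinAt.sub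
        continuousWithinAt_const)
      (fun r hr => ((hγ r (hIcc (Ico_subset_Icc_self hr))).sub_const ξ₀).hasDerivWithinAt)
      le_rfl (fun r hr => by
        simpa using hW _ (hsub (Ico_subset_Icc_self hr))) u ⟨hu.1, le_rfl⟩
    rw [gronwallBound_ε0, sub_zero] at this
    refine this.trans (mul_le_mul_of_nonneg_left ?_ (norm_nonneg _))
    exact Real.exp_le_exp.2 (mul_le_of_le_one_right hK hu.2)
  have hball : Icc (0 : ℝ) 1 ⊆ γ ⁻¹' closedBall ξ₀ ρ := by
    refine Icc_subset_preimage_of_bootstrap (fun u hu => (hγ u hu).continuousAt)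
      isClosed_closedBall ?_ fun u hu hsub => ?_
    · rw [mem_closedBall, dist_eq_norm]
      exact (le_mul_of_one_le_right (norm_nonneg _) (Real.one_le_exp hK)).trans hγ₀.le
    · refine ball_subset_interior_closedBall ?_
      rw [mem_ball, dist_eq_norm]
      exact (gronwall u (Ico_subset_Icc_self hu) hsub).trans_lt hγ₀
  exact fun u hu => gronwall u hu ((Icc_subset_Icc_right hu.2).trans hball)

theorem norm_trajectory_sub_exp_apply_le_gronwallBound [CompleteSpace E] {W : E → E} {A : E →L[ℝ] E}
    {ξ₀ : E} {s : Set E} {ε : ℝ} (hW : ∀ ξ ∈ s, ‖W ξ - A (ξ - ξ₀)‖ ≤ ε) {γ : ℝ → E}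
    (hγ : ∀ u ∈ Icc (0 : ℝ) 1, HasDerivAt γ (W (γ u)) u) (hγs : ∀ u ∈ Icc (0 : ℝ) 1, γ u ∈ s) :
    ‖γ 1 - ξ₀ - NormedSpace.exp A (γ 0 - ξ₀)‖ ≤ gronwallBound 0 ‖A‖ ε 1 := by
  have hlin : ∀ u, HasDerivAt (fun u : ℝ => NormedSpace.exp (u • A) (γ 0 - ξ₀))
      (A (NormedSpace.exp (u • A) (γ 0 - ξ₀))) u := fun u => by
    simpa using (hasDerivAt_exp_smul_const' A u).clm_apply (hasDerivAt_const u (γ 0 - ξ₀))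
  have := dist_le_of_approx_trajectories_ODE (v := fun _ => A) (K := ‖A‖₊)
    (f := fun u => γ u - ξ₀) (g := fun u => NormedSpace.exp (u • A) (γ 0 - ξ₀))
    (εf := ε) (εg := 0) (δ := 0) (fun _ => A.lipschitz)
    (fun u hu => ((hγ u hu).continuousAt.sub continuousAt_const).continuousWithinAt)
    (fun u hu => ((hγ u (Ico_subset_Icc_self hu)).sub_const ξ₀).hasDerivWithinAt)
    (fun u hu => by simpa [dist_eq_norm] using hW _ (hγs u (Ico_subset_Icc_self hu)))
    (fun u _ => (hlin u).continuousAt.continuousWithinAt)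
    (fun u _ => (hlin u).hasDerivWithinAt) (fun u _ => by simp) (by simp) 1 ⟨zero_le_one, le_rfl⟩
  simpa [dist_eq_norm] using this

theorem norm_trajectory_sub_exp_apply_le [CompleteSpace E] {W : E → E}
    {A : E →L[ℝ] E} {ξ₀ : E} {ρ ε : ℝ} (hε₀ : 0 ≤ ε) (hε₁ : ε ≤ 1)
    (hW : ∀ ξ ∈ closedBall ξ₀ ρ, ‖W ξ - A (ξ - ξ₀)‖ ≤ ε * ‖ξ - ξ₀‖) {γ : ℝ → E}
    (hγ : ∀ u ∈ Icc (0 : ℝ) 1, HasDerivAt γ (W (γ u)) u)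
    (hγ₀ : ‖γ 0 - ξ₀‖ * Real.exp (‖A‖ + 1) < ρ) :
    ‖γ 1 - ξ₀ - NormedSpace.exp A (γ 0 - ξ₀)‖
      ≤ ε * (Real.exp (‖A‖ + 1) * gronwallBound 0 ‖A‖ 1 1) * ‖γ 0 - ξ₀‖ := by
  set R := ‖γ 0 - ξ₀‖ * Real.exp (‖A‖ + 1)
  have hW_le : ∀ ξ ∈ closedBall ξ₀ ρ, ‖W ξ‖ ≤ (‖A‖ + 1) * ‖ξ - ξ₀‖ := fun ξ hξ =>
    calc ‖W ξ‖ ≤ ‖W ξ - A (ξ - ξ₀)‖ + ‖A (ξ - ξ₀)‖ := norm_le_norm_sub_add _ _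
      _ ≤ ε * ‖ξ - ξ₀‖ + ‖A‖ * ‖ξ - ξ₀‖ := add_le_add (hW ξ hξ) (A.le_opNorm _)
      _ ≤ (‖A‖ + 1) * ‖ξ - ξ₀‖ := by nlinarith [norm_nonneg (ξ - ξ₀)]
  have hγR := norm_trajectory_sub_le_mul_exp (by positivity) hW_le hγ hγ₀
  have := norm_trajectory_sub_exp_apply_le_gronwallBound (A := A) (ξ₀ := ξ₀) (ε := ε * R)
    (s := closedBall ξ₀ R) (fun ξ hξ => ?_) hγ (fun u hu => mem_closedBall_iff_norm.2 (hγR u hu))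
  · rw [gronwallBound_zero_eq_mul] at this
    exact this.trans_eq (by ring)
  · exact (hW ξ (closedBall_subset_closedBall hγ₀.le hξ)).trans
      (mul_le_mul_of_nonneg_left (mem_closedBall_iff_norm.1 hξ) hε₀)

theorem hasFDerivAt_trajectory_of_equilibrium [CompleteSpace E] {W : E → E} {A : E →L[ℝ] E}
    {ξ₀ : E} (hW : HasFDerivAt W A ξ₀) (hW₀ : W ξ₀ = 0) {γ : E → ℝ → E}
    (hγ : ∀ᶠ η in 𝓝 ξ₀, γ η 0 = η ∧ ∀ u ∈ Icc (0 : ℝ) 1, HasDerivAt (γ η) (W (γ η u)) u) :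
    HasFDerivAt (fun η => γ η 1) (NormedSpace.exp A) ξ₀ := by
  set C := Real.exp (‖A‖ + 1) * gronwallBound 0 ‖A‖ 1 1
  have hC : 0 ≤ C := by
    have := gronwallBound_mono le_rfl zero_le_one (norm_nonneg A) zero_le_one
    rw [gronwallBound_x0] at this
    positivity
  have key : ∀ ε ∈ Ioc (0 : ℝ) 1, ∀ᶠ η in 𝓝 ξ₀,
      ‖γ η 1 - ξ₀ - NormedSpace.exp A (η - ξ₀)‖ ≤ ε * C * ‖η - ξ₀‖ := by
    intro ε hε
    obtain ⟨ρ, hρ, hWρ⟩ := nhds_basis_closedBall.eventually_iff.1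
      (by simpa only [hW₀, sub_zero] using hW.isLittleO.bound hε.1)
    have hnear : ∀ᶠ η in 𝓝 ξ₀, ‖η - ξ₀‖ * Real.exp (‖A‖ + 1) < ρ :=
      ContinuousAt.eventually_lt (by fun_prop) continuousAt_const (by simpa using hρ)
    filter_upwards [hγ, hnear] with η ⟨hη₀, hηW⟩ hη
    simpa only [hη₀] using norm_trajectory_sub_exp_apply_le hε.1.le hε.2 hWρ hηW
      (by rwa [hη₀])
  have hfix : γ ξ₀ 1 = ξ₀ := by
    simpa [sub_eq_zero] using (key 1 ⟨one_pos, le_rfl⟩).self_of_nhds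
  refine HasFDerivAt.of_isLittleO (Asymptotics.isLittleO_iff.2 fun c hc => ?_)
  set ε := min 1 (c / (C + 1))
  have hεC : ε * C ≤ c := by
    calc ε * C ≤ c / (C + 1) * (C + 1) := by gcongr; exacts [min_le_right _ _, by linarith]
      _ = c := div_mul_cancel₀ _ (by positivity)
  filter_upwards [key ε ⟨by positivity, min_le_left _ _⟩] with η hη
  rw [hfix]
  exact hη.trans (by gcongr)

theorem NormedSpace.exp_eq_one_add_of_mul_self_eq_zero {𝔸 : Type*} [Ring 𝔸]
    [Algebra ℝ 𝔸] [TopologicalSpace 𝔸] [IsTopologicalRing 𝔸] [T2Space 𝔸] {a : 𝔸}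
    (ha : a * a = 0) : NormedSpace.exp a = 1 + a := by
  rw [NormedSpace.exp_eq_tsum ℝ]
  dsimp only
  rw [tsum_eq_sum (s := Finset.range 2)]
  · simp [Finset.sum_range_succ]
  · intro k hk
    rw [Finset.mem_range, not_lt] at hk
    rw [pow_eq_zero_of_le hk (by rwa [sq]), smul_zero]

end Linearization

namespace PoissonPaper

variable {n : ℕ}

def sharpCLM (Pb : Vec n → Fin n → Fin n → ℝ) (x : Vec n) : Vec n →L[ℝ] Vec n :=
  LinearMap.toContinuousLinearMap (Matrix.toLin' (Matrix.of fun q p => Pb x p q))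

@[simp]
theorem sharp_zero (Pb : Vec n → Fin n → Fin n → ℝ) (x : Vec n) : sharp Pb x 0 = 0 :=
  (sharpCLM Pb x).map_zero

def sprayLinearization (Pb : Vec n → Fin n → Fin n → ℝ) (x : Vec n) : Pt n →L[ℝ] Pt n :=
  .inl ℝ (Vec n) (Vec n) ∘L sharpCLM Pb x ∘L .snd ℝ (Vec n) (Vec n)

theorem sprayLinearization_apply (Pb : Vec n → Fin n → Fin n → ℝ) (x : Vec n) (v : Pt n) :
    sprayLinearization Pb x v = (sharp Pb x v.2, 0) := rfl

theorem sprayLinearization_mul_self (Pb : Vec n → Fin n → Fin n → ℝ) (x : Vec n) :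
    sprayLinearization Pb x * sprayLinearization Pb x = 0 := by
  refine ContinuousLinearMap.ext fun v => ?_
  simp [sprayLinearization_apply]

theorem continuousAt_sharp {Pb : Vec n → Fin n → Fin n → ℝ} {x : Vec n}
    (hPb : ∀ p q, ContinuousAt (fun z => Pb z p q) x) (θ : Vec n) :
    ContinuousAt (fun z => sharp Pb z θ) x :=
  continuousAt_pi.2 fun q => by simp only [sharp]; fun_prop

theorem IsSpray.apply_zero_section {U : Set (Vec n)} {Pb : Vec n → Fin n → Fin n → ℝ}
    {V : Pt n → Pt n} (hV : IsSpray U Pb V) {z : Vec n} (hz : z ∈ U) :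
    V (z, 0) = 0 := by
  refine Prod.ext (by rw [hV.base (z, 0) hz, sharp_zero]; rfl) ?_
  have h₂ := congrArg Prod.snd (hV.homog 2 two_pos (z, 0) hz)
  simp only [smul_zero, smul_smul] at h₂
  have : ((2 : ℝ) * 2 - 1) • (V (z, 0)).2 = 0 := by rw [sub_smul, one_smul, ← h₂, sub_self]
  exact (smul_eq_zero.1 this).resolve_left (by norm_num)

theorem IsSpray.hasFDerivAt_zero_section {U : Set (Vec n)} {Pb : Vec n → Fin n → Fin n → ℝ}
    {V : Pt n → Pt n} (hV : IsSpray U Pb V) (hU : IsOpen U) {x : Vec n} (hx : x ∈ U)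
    (hPb : ∀ p q, ContinuousAt (fun z => Pb z p q) x) :
    HasFDerivAt V (sprayLinearization Pb x) (x, 0) := by
  have hVcont : ∀ θ : Vec n, ContinuousAt V (x, θ) := fun θ =>
    hV.smooth.continuousOn.continuousAt (prod_mem_nhds (hU.mem_nhds hx) univ_mem)
  have hdiff : DifferentiableAt ℝ V (x, 0) :=
    (hV.smooth.contDiffAt (prod_mem_nhds (hU.mem_nhds hx) univ_mem)).differentiableAt (by simp)
  convert hdiff.hasFDerivAt using 1
  refine ContinuousLinearMap.ext fun v => ?_
  have hline : HasDerivAt (fun s : ℝ => V ((x, 0) + s • v)) (fderiv ℝ V (x, 0) v) 0 :=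
    hdiff.hasFDerivAt.comp_hasDerivAt_of_eq (0 : ℝ)
      (by simpa using ((hasDerivAt_id (0 : ℝ)).smul_const v).const_add ((x, 0) : Pt n))
      (by simp)
  -- by homogeneity, `G s` is the difference quotient of `V` along `s ↦ 0_x + s • v` for `s > 0`
  set G : ℝ → Pt n := fun s => (sharp Pb (x + s • v.1) v.2, s • (V (x + s • v.1, v.2)).2)
  have hbase : ContinuousAt (fun s : ℝ => x + s • v.1) 0 := by fun_prop
  have hG : ContinuousAt G 0 :=
    ((continuousAt_sharp hPb v.2).comp_of_eq hbase (by simp)).prodMk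
      (continuousAt_id.smul (continuousAt_snd.comp
        ((hVcont v.2).comp_of_eq (hbase.prodMk continuousAt_const) (by simp))))
  have hslope : ∀ᶠ s in 𝓝[>] (0 : ℝ), s⁻¹ • (V ((x, 0) + s • v) - V (x, 0)) = G s := by
    have hU' : ∀ᶠ s in 𝓝 (0 : ℝ), x + s • v.1 ∈ U :=
      hbase.preimage_mem_nhds (by simpa using hU.mem_nhds hx)
    filter_upwards [self_mem_nhdsWithin, mem_nhdsWithin_of_mem_nhds hU'] with s hs hsU
    have hhom := hV.homog s hs (x + s • v.1, v.2) hsU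
    rw [hV.base _ hsU] at hhom
    have hpt : ((x, 0) : Pt n) + s • v = (x + s • v.1, s • v.2) := by ext <;> simp
    rw [hpt, hV.apply_zero_section hx, sub_zero, hhom]
    have hs₀ : s ≠ 0 := (mem_Ioi.1 hs).ne'
    ext <;> simp [G, smul_smul, ← mul_assoc, inv_mul_cancel₀ hs₀]
  have hslope_lim := hline.tendsto_slope_zero_right
  simp only [zero_add, zero_smul, add_zero] at hslope_lim
  refine tendsto_nhds_unique ?_ (hslope_lim.congr' hslope)
  simpa [G, sprayLinearization_apply] using hG.tendsto.mono_left nhdsWithin_le_nhds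

theorem IsLocalFlow.hasDerivAt_comp_mul {U : Set (Vec n)} {V : Pt n → Pt n}
    {D : Set (ℝ × Pt n)} {φ : ℝ → Pt n → Pt n} (hφ : IsLocalFlow U V D φ) {t u : ℝ} {η : Pt n}
    (h : (t * u, η) ∈ D) :
    HasDerivAt (fun u => φ (t * u) η) (t • V (φ (t * u) η)) u := by
  exact (hφ.hasDeriv (t * u) η h).scomp u (by simpa using (hasDerivAt_id u).const_mul t)

/-- Under the canonical identification `T_{0_x}(T*M) ≅ T_x M ⊕ T*_x M`,
`v ↦ (v̄, θ_v)`, the differential of the flow of a Poisson spray at a zero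
covector `0_x` is `(dφ_t)_{0_x} : (v̄, θ_v) ↦ (v̄ + t π♯(θ_v), θ_v)`. -/
theorem flow_differential_at_zero_section
    {n : ℕ} (U : Set (Vec n)) (hU : IsOpen U)
    (Pb : Vec n → Fin n → Fin n → ℝ) (hPb : IsPoissonOn U Pb)
    (V : Pt n → Pt n) (hV : IsSpray U Pb V)
    (D : Set (ℝ × Pt n)) (φ : ℝ → Pt n → Pt n) (hφ : IsLocalFlow U V D φ)
    (x : Vec n) (hx : x ∈ U) (t : ℝ)
    -- the flow is defined up to time `t` on a neighborhood `W` of `0_x`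
    (W : Set (Pt n)) (hWopen : IsOpen W) (hxW : ((x, (0 : Vec n)) : Pt n) ∈ W)
    (hWD : ∀ η ∈ W, ∀ s ∈ uIcc (0:ℝ) t, (s, η) ∈ D)
    (v : Pt n) :
    fderiv ℝ (φ t) ((x, (0 : Vec n)) : Pt n) v
      = (v.1 + t • sharp Pb x v.2, v.2) := by
  have hPb_cont : ∀ p q, ContinuousAt (fun z => Pb z p q) x := fun p q =>
    (hPb.1.1 p q).continuousOn.continuousAt (hU.mem_nhds hx)
  have hA : HasFDerivAt (fun ξ => t • V ξ) (t • sprayLinearization Pb x) (x, 0) :=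
    (hV.hasFDerivAt_zero_section hU hx hPb_cont).const_smul t
  have hγ : ∀ᶠ η in 𝓝 ((x, 0) : Pt n), φ (t * 0) η = η ∧ ∀ u ∈ Icc (0 : ℝ) 1,
      HasDerivAt (fun u => φ (t * u) η) (t • V (φ (t * u) η)) u := by
    filter_upwards [hWopen.mem_nhds hxW] with η hη
    refine ⟨by rw [mul_zero, hφ.init], fun u hu => hφ.hasDerivAt_comp_mul (hWD η hη _ ?_)⟩
    rw [← segment_eq_uIcc, segment_eq_image_lineMap]
    exact ⟨u, hu, by simp [AffineMap.lineMap_apply, mul_comm]⟩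
  have hflow := hasFDerivAt_trajectory_of_equilibrium (γ := fun η u => φ (t * u) η) hA
    (by simp [hV.apply_zero_section hx]) hγ
  rw [NormedSpace.exp_eq_one_add_of_mul_self_eq_zero (by
    rw [smul_mul_smul_comm, sprayLinearization_mul_self, smul_zero])] at hflow
  simp only [mul_one] at hflow
  rw [hflow.fderiv]
  ext <;> simp [sprayLinearization_apply]

end PoissonPaper
end
end

section
/- Let (M, π) be a Poisson manifold and ∇ a torsion-free classical connection on TM. Then for any cotangent path a with base path γ, any smooth path θ in T*M above γ, and any smooth path v in TM above γ, one has ⟨∇̄_a(θ), v⟩ + ⟨θ, ∇̄_a(v)⟩ = d/dt ⟨θ, v⟩, where ∇̄_a denotes the derivative along the cotangent path a with respect to the induced contravariant connections on T*M and TM. -/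
/-!
Formalization framework for "On the existence of symplectic realizations"
(Crainic–Mărcuț).  We work on a chart: the Poisson manifold is an open set
`U ⊆ ℝⁿ` (with `Vec n := Fin n → ℝ`), its cotangent bundle is
`T*U = U × ℝⁿ ⊆ Pt n := Vec n × Vec n`, with bundle projection `Prod.fst`.
A bivector field is given by its components `Pb x p q = π_{pq}(x)`, a classical
connection on `TM` by its Christoffel symbols `Γ x p q r = Γ_{pq}^r(x)`.
-/

noncomputable section
open Set

namespace PoissonPaper

variable {n : ℕ}

/-! When `π` is antisymmetric and `∇` torsion-free, the coefficients of the two induced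
contravariant connections satisfy `(∇̄_{dx_p} ∂_q)^r = -(∇̄_{dx_p} dx_r)_q`: the connection on
`TM` is the dual of the one on `T*M`. Along any path the connection terms of
`⟨∇̄_a θ, v⟩ + ⟨θ, ∇̄_a v⟩` therefore cancel, and what is left is the product rule for
`d/dt ⟨θ, v⟩`. -/

section

variable {a γ θ v : ℝ → Vec n}

theorem GbarTM_eq_neg_GbarT1 {Pb : Vec n → Fin n → Fin n → ℝ}
    {Γ : Vec n → Fin n → Fin n → Fin n → ℝ} {x : Vec n}
    (hPb : ∀ p q, Pb x q p = -Pb x p q) (hΓ : ∀ p q r, Γ x q p r = Γ x p q r)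
    (p q r : Fin n) :
    GbarTM Pb Γ x p q r = -GbarT1 Pb Γ x p r q := by
  have hsum : ∑ s, Pb x s r * Γ x q s p = -∑ s, Pb x r s * Γ x s q p := by
    rw [← Finset.sum_neg_distrib]
    exact Finset.sum_congr rfl fun s _ => by rw [hPb r s, hΓ s q p]; ring
  simp only [GbarTM, GbarT1, hsum]
  ring

theorem hasDerivAt_pairing {t : ℝ} (hθ : ∀ r, DifferentiableAt ℝ (fun s => θ s r) t)
    (hv : ∀ r, DifferentiableAt ℝ (fun s => v s r) t) :
    HasDerivAt (fun s => ∑ r, θ s r * v s r)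
      (∑ r, (deriv (fun s => θ s r) t * v t r + θ t r * deriv (fun s => v s r) t)) t :=
  HasDerivAt.fun_sum fun r _ => (hθ r).hasDerivAt.mul (hv r).hasDerivAt

theorem sum_covAlong_mul_add_sum_mul_covAlong {G G' : Vec n → Fin n → Fin n → Fin n → ℝ}
    {t : ℝ} (hG : ∀ p q r, G' (γ t) p q r = -G (γ t) p r q)
    (hθ : ∀ r, DifferentiableAt ℝ (fun s => θ s r) t)
    (hv : ∀ r, DifferentiableAt ℝ (fun s => v s r) t) :
    (∑ r, covAlong G a γ θ t r * v t r) + (∑ r, θ t r * covAlong G' a γ v t r)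
      = deriv (fun s => ∑ r, θ s r * v s r) t := by
  have hcross : ∑ r, θ t r * ∑ p, ∑ q, a t p * v t q * G' (γ t) p q r
      = -∑ r, (∑ p, ∑ q, a t p * θ t q * G (γ t) p q r) * v t r := by
    simp only [hG, Finset.mul_sum, Finset.sum_mul, ← Finset.sum_neg_distrib]
    rw [Finset.sum_comm]
    conv_rhs => rw [Finset.sum_comm]
    refine Finset.sum_congr rfl fun p _ => ?_
    rw [Finset.sum_comm]
    exact Finset.sum_congr rfl fun q _ => Finset.sum_congr rfl fun r _ => by ring
  rw [(hasDerivAt_pairing hθ hv).deriv]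
  simp only [covAlong, add_mul, mul_add, Finset.sum_add_distrib, hcross]
  ring

end

theorem pairing_derivative_along_cotangent_path_general
    {n : ℕ} (U : Set (Vec n))
    (Pb : Vec n → Fin n → Fin n → ℝ) (hPb : IsPoissonOn U Pb)
    (Γ : Vec n → Fin n → Fin n → Fin n → ℝ)
    (hΓsym : ∀ x p q r, Γ x q p r = Γ x p q r)  -- torsion-free
    (a γ : ℝ → Vec n)
    (hγU : ∀ t ∈ Icc (0:ℝ) 1, γ t ∈ U)
    (θ v : ℝ → Vec n)
    (hθ : ∀ r, Differentiable ℝ fun s => θ s r)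
    (hv : ∀ r, Differentiable ℝ fun s => v s r) :
    ∀ t ∈ Icc (0:ℝ) 1,
      (∑ r, covAlong (GbarT1 Pb Γ) a γ θ t r * v t r)
        + (∑ r, θ t r * covAlong (GbarTM Pb Γ) a γ v t r)
      = deriv (fun s => ∑ r, θ s r * v s r) t := fun t ht =>
  sum_covAlong_mul_add_sum_mul_covAlong
    (GbarTM_eq_neg_GbarT1 (hPb.1.2 (γ t) (hγU t ht)) (hΓsym (γ t)))
    (fun r => hθ r t) (fun r => hv r t)

/-- **Lemma (compatibility with the pairing).** If the classical connection
`∇` is torsion-free then, for any cotangent path `a` with base path `γ`, any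
smooth path `θ` in `T*M` above `γ` and any smooth path `v` in `TM` above `γ`,
`⟨∇̄_a(θ), v⟩ + ⟨θ, ∇̄_a(v)⟩ = d/dt ⟨θ, v⟩`,
where `∇̄_a` denotes the derivative along `a` for the induced contravariant
connections on `T*M` and `TM`. -/
theorem pairing_derivative_along_cotangent_path
    {n : ℕ} (U : Set (Vec n)) (hU : IsOpen U)
    (Pb : Vec n → Fin n → Fin n → ℝ) (hPb : IsPoissonOn U Pb)
    (Γ : Vec n → Fin n → Fin n → Fin n → ℝ)
    (hΓsym : ∀ x p q r, Γ x q p r = Γ x p q r)  -- torsion-free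
    (hΓ : ∀ p q r, ContDiffOn ℝ (⊤ : ℕ∞) (fun x => Γ x p q r) U)
    (a γ : ℝ → Vec n)
    (hγU : ∀ t ∈ Icc (0:ℝ) 1, γ t ∈ U)
    (hcot : ∀ t ∈ Icc (0:ℝ) 1, HasDerivAt γ (sharp Pb (γ t) (a t)) t)
    (θ v : ℝ → Vec n)
    (hθ : ∀ r, Differentiable ℝ fun s => θ s r)
    (hv : ∀ r, Differentiable ℝ fun s => v s r) :
    ∀ t ∈ Icc (0:ℝ) 1,
      (∑ r, covAlong (GbarT1 Pb Γ) a γ θ t r * v t r)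
        + (∑ r, θ t r * covAlong (GbarTM Pb Γ) a γ v t r)
      = deriv (fun s => ∑ r, θ s r * v s r) t :=
  pairing_derivative_along_cotangent_path_general U Pb hPb Γ hΓsym a γ hγU θ v hθ hv

end PoissonPaper
end
end

section
/- Let (M, π) be a Poisson manifold, V_π a Poisson spray with flow φ_t, ∇ a torsion-free classical connection on TM, and ξ ∈ T*M such that φ_t(ξ) is defined for t ∈ [0,1]; set a(t) = φ_t(ξ) with base path γ = p ∘ a. For v₀ ∈ T_ξ(T*M) let v_t = (dφ_t)(v₀) ∈ T_{a(t)}(T*M), with components v̄_t ∈ T_{γ(t)}M and θ_{v_t} ∈ T*_{γ(t)}M with respect to ∇. Then if θ is a 1-form along γ (a vertical tangent vector field along a), the projection of its Lie derivative along V_π satisfies dp(L_{V_π}(θ)) = −π♯(θ), where for a tangent vector field V along a, L_{V_π}(V)(t) = d/ds|_{s=0} (dφ_{−s})_{a(s+t)}(V(s+t)). -/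
/-!
Formalization framework for "On the existence of symplectic realizations"
(Crainic–Mărcuț).  We work on a chart: the Poisson manifold is an open set
`U ⊆ ℝⁿ` (with `Vec n := Fin n → ℝ`), its cotangent bundle is
`T*U = U × ℝⁿ ⊆ Pt n := Vec n × Vec n`, with bundle projection `Prod.fst`.
A bivector field is given by its components `Pb x p q = π_{pq}(x)`, a classical
connection on `TM` by its Christoffel symbols `Γ x p q r = Γ_{pq}^r(x)`.
-/

noncomputable section
open Set

/-!
Write `A_s = (dφ_{-s})_{φ_s x}`. If `P` solves the variational equation `P' = (dV)_{φ_r x} ∘ P`,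
`P 0 = 1`, then `r ↦ P (s + r) ∘ P s⁻¹` solves the variational equation along the trajectory of
`φ_s x`, so `A_s = P s⁻¹` and `d/ds|₀ A_s (w s) = w' 0 - (dV)_x (w 0)`. For `w s = (0, θ (t + s))`
only the base component is asked for: that of `w' 0` vanishes, and that of `(dV)_x (0, θ)` is
`π♯ θ`, since `dp ∘ V = π♯` is linear on the fibres.

The identification of `A_s` rests on the differentiability of a flow in the initial point, with
derivative the solution of the variational equation; this is the classical Grönwall estimate of
the linearization error along a trajectory.
-/

section FlowDerivative

open Filter Topology Metric
open scoped NNReal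

variable {E : Type*} [NormedAddCommGroup E] [NormedSpace ℝ E]

theorem IsCompact.exists_forall_norm_sub_sub_fderiv_le {v : E → E} {Ω K : Set E}
    (hΩ : IsOpen Ω) (hv : ContDiffOn ℝ 1 v Ω) (hK : IsCompact K) (hKΩ : K ⊆ Ω)
    {c : ℝ} (hc : 0 < c) :
    ∃ η > 0, ∀ b ∈ K, ∀ a ∈ closedBall b η, ∀ a' ∈ closedBall b η,
      ‖v a - v a' - fderiv ℝ v b (a - a')‖ ≤ c * ‖a - a'‖ := by
  obtain ⟨η₁, hη₁, hthick⟩ := hK.exists_cthickening_subset_open hΩ hKΩ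
  have hDv := hv.continuousOn_fderiv_of_isOpen hΩ le_rfl
  obtain ⟨ε, hε, hunif⟩ := Metric.mem_uniformity_dist.1 <|
    hK.uniformContinuousAt_of_continuousAt (fderiv ℝ v)
      (fun b hb => hDv.continuousAt (hΩ.mem_nhds (hKΩ hb))) (Metric.dist_mem_uniformity hc)
  refine ⟨min η₁ (ε / 2), by positivity, fun b hb a ha a' ha' => ?_⟩
  have hball : closedBall b (min η₁ (ε / 2)) ⊆ Ω := fun z hz =>
    hthick (mem_cthickening_of_dist_le z b _ K hb ((mem_closedBall.1 hz).trans (min_le_left _ _)))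
  refine (convex_closedBall b _).norm_image_sub_le_of_norm_hasFDerivWithin_le'
    (fun z hz => ((hv.differentiableOn one_ne_zero).differentiableAt
      (hΩ.mem_nhds (hball hz))).hasFDerivAt.hasFDerivWithinAt) (fun z hz => ?_) ha' ha
  rw [← dist_eq_norm, dist_comm]
  refine (hunif ?_ hb).le
  rw [dist_comm]
  exact (mem_closedBall.1 hz).trans_lt ((min_le_right _ _).trans_lt (half_lt_self hε))

theorem dist_le_of_trajectories_of_lipschitzOnWith_closedBall {v : E → E} {f g : ℝ → E}
    {K : ℝ≥0} {a b η : ℝ} (hv : ∀ t ∈ Icc a b, LipschitzOnWith K v (closedBall (g t) η))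
    (hf : ∀ t ∈ Icc a b, HasDerivAt f (v (f t)) t) (hg : ∀ t ∈ Icc a b, HasDerivAt g (v (g t)) t)
    (hfg : dist (f a) (g a) * Real.exp (K * (b - a)) < η) :
    ∀ t ∈ Icc a b, dist (f t) (g t) ≤ dist (f a) (g a) * Real.exp (K * (t - a)) := by
  have hη : 0 ≤ η := (by positivity : 0 ≤ dist (f a) (g a) * Real.exp (K * (b - a))).trans hfg.le
  have hcont {h : ℝ → E} (hh : ∀ t ∈ Icc a b, HasDerivAt h (v (h t)) t) :
      ContinuousOn h (Icc a b) := fun t ht => (hh t ht).continuousAt.continuousWithinAt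
  have gronwall : ∀ c ∈ Icc a b, (∀ t ∈ Ico a c, dist (f t) (g t) < η) →
      ∀ t ∈ Icc a c, dist (f t) (g t) ≤ dist (f a) (g a) * Real.exp (K * (t - a)) := by
    intro c hc hclose
    have hsub : Icc a c ⊆ Icc a b := Icc_subset_Icc_right hc.2
    exact dist_le_of_trajectories_ODE_of_mem (v := fun _ => v) (s := fun t => closedBall (g t) η)
      (fun t ht => hv t (hsub (Ico_subset_Icc_self ht))) ((hcont hf).mono hsub)
      (fun t ht => (hf t (hsub (Ico_subset_Icc_self ht))).hasDerivWithinAt)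
      (fun t ht => mem_closedBall.2 (hclose t ht).le) ((hcont hg).mono hsub)
      (fun t ht => (hg t (hsub (Ico_subset_Icc_self ht))).hasDerivWithinAt)
      (fun t _ => mem_closedBall_self hη) le_rfl
  -- The trajectories stay `η`-close up to time `b`: at a first time of leaving, Grönwall's
  -- bound would already keep them closer than `η`.
  have hclose : ∀ t ∈ Icc a b, dist (f t) (g t) < η := by
    by_contra! hfar
    obtain ⟨t₀, ht₀, hfar₀⟩ := hfar
    set bad := Icc a b ∩ (fun t => dist (f t) (g t)) ⁻¹' Ici η
    have hbad : IsClosed bad :=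
      ContinuousOn.preimage_isClosed_of_isClosed
        (continuous_dist.comp_continuousOn ((hcont hf).prodMk (hcont hg))) isClosed_Icc isClosed_Ici
    have hc := hbad.csInf_mem ⟨t₀, ht₀, hfar₀⟩ ⟨a, fun t ht => ht.1.1⟩
    have hbefore : ∀ t ∈ Ico a (sInf bad), dist (f t) (g t) < η := fun t ht =>
      lt_of_not_ge fun h => (csInf_le (s := bad) ⟨a, fun s hs => hs.1.1⟩
        ⟨⟨ht.1, ht.2.le.trans hc.1.2⟩, h⟩).not_gt ht.2
    refine (hc.2 : η ≤ _).not_gt ((gronwall _ hc.1 hbefore _ (right_mem_Icc.2 hc.1.1)).trans_lt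
      (lt_of_le_of_lt ?_ hfg))
    gcongr
    exact hc.1.2
  intro t ht
  exact gronwall b (right_mem_Icc.2 (ht.1.trans ht.2))
    (fun s hs => hclose s (Ico_subset_Icc_self hs)) t ht

theorem norm_sub_sub_variational_le_gronwallBound {v : E → E} {Dv : E → E →L[ℝ] E}
    {f y : ℝ → E} {W : ℝ → E →L[ℝ] E} {L ε u : ℝ} (hu : 0 ≤ u)
    (hf : ∀ r ∈ Icc 0 u, HasDerivAt f (v (f r)) r) (hy : ∀ r ∈ Icc 0 u, HasDerivAt y (v (y r)) r)
    (hW0 : W 0 = 1) (hW : ∀ r ∈ Icc 0 u, HasDerivAt W ((Dv (y r)).comp (W r)) r)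
    (hDv : ∀ r ∈ Icc 0 u, ‖Dv (y r)‖ ≤ L)
    (hlin : ∀ r ∈ Icc 0 u, ‖v (f r) - v (y r) - Dv (y r) (f r - y r)‖ ≤ ε) :
    ‖f u - y u - W u (f 0 - y 0)‖ ≤ gronwallBound 0 L ε u := by
  set e : ℝ → E := fun r => f r - y r - W r (f 0 - y 0)
  have he : ∀ r ∈ Icc 0 u, HasDerivAt e (v (f r) - v (y r) - Dv (y r) (W r (f 0 - y 0))) r :=
    fun r hr => ((hf r hr).sub (hy r hr)).sub
      (by simpa using (hW r hr).clm_apply (hasDerivAt_const r (f 0 - y 0)))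
  have he' : ∀ r ∈ Icc 0 u, v (f r) - v (y r) - Dv (y r) (W r (f 0 - y 0))
      = (v (f r) - v (y r) - Dv (y r) (f r - y r)) + Dv (y r) (e r) := by
    intro r _
    simp only [e, map_sub]
    abel
  have hbound : ∀ r ∈ Ico 0 u, ‖v (f r) - v (y r) - Dv (y r) (W r (f 0 - y 0))‖
      ≤ L * ‖e r‖ + ε := by
    intro r hr
    have hr := Ico_subset_Icc_self hr
    rw [he' r hr, add_comm]
    calc _ ≤ ‖Dv (y r) (e r)‖ + ‖v (f r) - v (y r) - Dv (y r) (f r - y r)‖ := norm_add_le _ _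
      _ ≤ L * ‖e r‖ + ε :=
        add_le_add (((Dv (y r)).le_opNorm _).trans (by gcongr; exact hDv r hr)) (hlin r hr)
  simpa only [sub_zero] using norm_le_gronwallBound_of_norm_deriv_right_le (δ := 0) (f := e)
    (fun r hr => (he r hr).continuousAt.continuousWithinAt)
    (fun r hr => (he r (Ico_subset_Icc_self hr)).hasDerivWithinAt)
    (by simp [e, hW0]) hbound u (right_mem_Icc.2 hu)

theorem IsCompact.exists_lipschitzOnWith_closedBall {v : E → E} {Ω K : Set E}
    (hΩ : IsOpen Ω) (hv : ContDiffOn ℝ 1 v Ω) (hK : IsCompact K) (hKΩ : K ⊆ Ω) :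
    ∃ L : ℝ≥0, 0 < L ∧ (∀ b ∈ K, ‖fderiv ℝ v b‖ ≤ L) ∧
      ∃ η > 0, ∀ b ∈ K, LipschitzOnWith L v (closedBall b η) := by
  obtain ⟨C, hC⟩ := hK.exists_bound_of_continuousOn
    ((hv.continuousOn_fderiv_of_isOpen hΩ le_rfl).mono hKΩ)
  have hCL : C + 1 ≤ ((C.toNNReal + 1 : ℝ≥0) : ℝ) := by simp
  obtain ⟨η, hη, hlin⟩ := hK.exists_forall_norm_sub_sub_fderiv_le hΩ hv hKΩ one_pos
  refine ⟨C.toNNReal + 1, by positivity, fun b hb => (hC b hb).trans (by linarith), η, hη,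
    fun b hb => LipschitzOnWith.of_dist_le_mul fun a ha a' ha' => ?_⟩
  rw [dist_eq_norm, dist_eq_norm]
  calc ‖v a - v a'‖ ≤ ‖fderiv ℝ v b (a - a')‖ + ‖v a - v a' - fderiv ℝ v b (a - a')‖ :=
        norm_le_insert' _ _
    _ ≤ C * ‖a - a'‖ + 1 * ‖a - a'‖ :=
        add_le_add (((fderiv ℝ v b).le_opNorm _).trans (by gcongr; exact hC b hb))
          (hlin b hb a ha a' ha')
    _ ≤ _ := by nlinarith [norm_nonneg (a - a')]

theorem hasFDerivAt_flow_of_variational_Icc {v : E → E} {Ω : Set E} (hΩ : IsOpen Ω)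
    (hv : ContDiffOn ℝ 1 v Ω) {Φ : ℝ → E → E} {z₀ : E} {u : ℝ} (hu : 0 ≤ u)
    (hΦ : ∀ᶠ z in 𝓝 z₀, Φ 0 z = z ∧ ∀ r ∈ Icc 0 u, HasDerivAt (fun τ => Φ τ z) (v (Φ r z)) r)
    (hΦΩ : ∀ r ∈ Icc 0 u, Φ r z₀ ∈ Ω) {W : ℝ → E →L[ℝ] E} (hW0 : W 0 = 1)
    (hW : ∀ r ∈ Icc 0 u, HasDerivAt W ((fderiv ℝ v (Φ r z₀)).comp (W r)) r) :
    HasFDerivAt (Φ u) (W u) z₀ := by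
  obtain ⟨hz₀, hy⟩ := hΦ.self_of_nhds
  set y : ℝ → E := fun r => Φ r z₀
  have hK : IsCompact (y '' Icc 0 u) :=
    isCompact_Icc.image_of_continuousOn fun r hr => (hy r hr).continuousAt.continuousWithinAt
  have hKΩ : y '' Icc 0 u ⊆ Ω := image_subset_iff.2 hΦΩ
  obtain ⟨L, hL, hDvL, η, hη, hLip⟩ := hK.exists_lipschitzOnWith_closedBall hΩ hv hKΩ
  set M := Real.exp (L * u)
  rw [hasFDerivAt_iff_isLittleO_nhds_zero, Asymptotics.isLittleO_iff]
  intro c hc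
  obtain ⟨δ, hδ, hlin⟩ :=
    hK.exists_forall_norm_sub_sub_fderiv_le hΩ hv hKΩ (by positivity : 0 < c * L / M ^ 2)
  have hnear : ∀ᶠ h in 𝓝 (0 : E), ‖h‖ * M < min η δ :=
    ((continuous_norm.mul continuous_const).tendsto' (0 : E) 0 (by simp)).eventually
      (gt_mem_nhds (lt_min hη hδ))
  filter_upwards [hnear, ((continuous_const_add z₀).tendsto' 0 z₀ (add_zero z₀)).eventually hΦ]
    with h hsmall ⟨hz0, hz⟩
  have hdist0 : dist (Φ 0 (z₀ + h)) (y 0) = ‖h‖ := by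
    rw [hz0, show y 0 = z₀ from hz₀, dist_eq_norm, add_sub_cancel_left]
  have htube : ∀ r ∈ Icc 0 u, ‖Φ r (z₀ + h) - y r‖ ≤ ‖h‖ * M := by
    intro r hr
    have := dist_le_of_trajectories_of_lipschitzOnWith_closedBall
      (fun r hr => hLip _ (mem_image_of_mem y hr)) hz hy
      (by rw [hdist0, sub_zero]; exact hsmall.trans_le (min_le_left _ _)) r hr
    rw [hdist0, sub_zero, dist_eq_norm] at this
    exact this.trans (by gcongr; exact Real.exp_le_exp.2 (by gcongr; exact hr.2))
  have hrem := norm_sub_sub_variational_le_gronwallBound hu hz hy hW0 hW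
    (fun r hr => hDvL _ (mem_image_of_mem y hr)) (ε := c * L / M ^ 2 * (‖h‖ * M)) fun r hr =>
      (hlin _ (mem_image_of_mem y hr) _
        (mem_closedBall_iff_norm.2 ((htube r hr).trans (hsmall.le.trans (min_le_right _ _))))
        _ (mem_closedBall_self hδ.le)).trans (by gcongr; exact htube r hr)
  rw [hz0, show y 0 = z₀ from hz₀, add_sub_cancel_left] at hrem
  refine hrem.trans ?_
  have hM : 0 < M := Real.exp_pos _
  simp only [gronwallBound_of_K_ne_0 (NNReal.coe_pos.2 hL).ne', zero_mul, zero_add]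
  calc _ ≤ c * L / M ^ 2 * (‖h‖ * M) / L * M := by gcongr; linarith
    _ = c * ‖h‖ := by field_simp

theorem hasFDerivAt_flow_of_variational {v : E → E} {Ω : Set E} (hΩ : IsOpen Ω)
    (hv : ContDiffOn ℝ 1 v Ω) {Φ : ℝ → E → E} {z₀ : E} {u : ℝ}
    (hΦ : ∀ᶠ z in 𝓝 z₀, Φ 0 z = z ∧ ∀ r ∈ uIcc 0 u, HasDerivAt (fun τ => Φ τ z) (v (Φ r z)) r)
    (hΦΩ : ∀ r ∈ uIcc 0 u, Φ r z₀ ∈ Ω) {W : ℝ → E →L[ℝ] E} (hW0 : W 0 = 1)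
    (hW : ∀ r ∈ uIcc 0 u, HasDerivAt W ((fderiv ℝ v (Φ r z₀)).comp (W r)) r) :
    HasFDerivAt (Φ u) (W u) z₀ := by
  rcases le_total 0 u with hu | hu
  · rw [uIcc_of_le hu] at hΦ hΦΩ hW
    exact hasFDerivAt_flow_of_variational_Icc hΩ hv hu hΦ hΦΩ hW0 hW
  -- Backwards in time, `r ↦ Φ (-r)` is a flow of `-v`.
  rw [uIcc_of_ge hu] at hΦ hΦΩ hW
  have hneg : ∀ r ∈ Icc 0 (-u), -r ∈ Icc u 0 := fun r hr => ⟨by linarith [hr.2], by linarith [hr.1]⟩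
  have := hasFDerivAt_flow_of_variational_Icc (v := fun z => -v z) (Φ := fun r => Φ (-r))
    (W := fun r => W (-r)) hΩ hv.neg (neg_nonneg.2 hu) ?_ (fun r hr => hΦΩ _ (hneg r hr))
    (by simpa using hW0) fun r hr => ?_
  · simpa using this
  · filter_upwards [hΦ] with z ⟨hz0, hz⟩
    refine ⟨by simpa using hz0, fun r hr => ?_⟩
    simpa [Function.comp_def] using (hz (-r) (hneg r hr)).scomp r (hasDerivAt_neg r)
  · simpa [Function.comp_def, fderiv_neg] using (hW (-r) (hneg r hr)).scomp r (hasDerivAt_neg r)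

theorem exists_hasDerivAt_clm_comp_of_continuousOn [CompleteSpace E] {G : ℝ → E →L[ℝ] E} {ε : ℝ}
    (hε : 0 < ε) (hG : ContinuousOn G (Icc (-ε) ε)) :
    ∃ ε' > 0, ∃ P : ℝ → E →L[ℝ] E, P 0 = 1 ∧
      ∀ r ∈ Ioo (-ε') ε', HasDerivAt P ((G r).comp (P r)) r := by
  obtain ⟨C, hC⟩ := isCompact_Icc.exists_bound_of_continuousOn hG
  set L : ℝ≥0 := C.toNNReal + 1
  have hL : 0 < (L : ℝ) := by positivity
  have hCL : C ≤ L := by simp only [L, NNReal.coe_add, NNReal.coe_one]; linarith [C.le_coe_toNNReal]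
  have hGL : ∀ r ∈ Icc (-ε) ε, ‖G r‖ ≤ L := fun r hr => (hC r hr).trans hCL
  set ε' := min ε (1 / (2 * L))
  have hε' : 0 < ε' := lt_min hε (by positivity)
  have hsub : Icc (-ε') ε' ⊆ Icc (-ε) ε :=
    Icc_subset_Icc (neg_le_neg (min_le_left _ _)) (min_le_left _ _)
  have hPL : IsPicardLindelof (fun r (Q : E →L[ℝ] E) => (G r).comp Q) (tmin := -ε') (tmax := ε')
      ⟨0, by constructor <;> linarith⟩ 1 1 0 (2 * L) L := by
    refine ⟨fun r hr => LipschitzOnWith.of_dist_le_mul fun Q _ Q' _ => ?_,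
      fun Q _ => (hG.mono hsub).clm_comp continuousOn_const, fun r hr Q hQ => ?_, ?_⟩
    · rw [dist_eq_norm, dist_eq_norm, ← ContinuousLinearMap.comp_sub]
      exact ((G r).opNorm_comp_le _).trans (by gcongr; exact hGL r (hsub hr))
    · have hQ2 : ‖Q‖ ≤ 2 := by
        rw [mem_closedBall, dist_eq_norm, NNReal.coe_one] at hQ
        have h1 : ‖(1 : E →L[ℝ] E)‖ ≤ 1 := ContinuousLinearMap.norm_id_le
        linarith [norm_le_norm_add_norm_sub' Q 1]
      calc ‖(G r).comp Q‖ ≤ ‖G r‖ * ‖Q‖ := (G r).opNorm_comp_le _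
        _ ≤ L * 2 := mul_le_mul (hGL r (hsub hr)) hQ2 (norm_nonneg _) hL.le
        _ = ((2 * L : ℝ≥0) : ℝ) := by push_cast; ring
    · simp only [NNReal.coe_mul, NNReal.coe_ofNat, sub_zero, zero_sub, neg_neg, max_self,
        NNReal.coe_one, NNReal.coe_zero]
      calc 2 * L * ε' ≤ 2 * L * (1 / (2 * L)) := by gcongr; exact min_le_right _ _
        _ = 1 := by field_simp
  obtain ⟨P, hP0, hP⟩ := hPL.exists_eq_forall_mem_Icc_hasDerivWithinAt₀
  exact ⟨ε', hε', P, hP0, fun r hr =>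
    (hP r (Ioo_subset_Icc_self hr)).hasDerivAt (Icc_mem_nhds hr.1 hr.2)⟩

theorem hasDerivAt_ringInverse_apply [CompleteSpace E] {P : ℝ → E →L[ℝ] E} {P' : E →L[ℝ] E}
    (hP : HasDerivAt P P' 0) (hP0 : P 0 = 1) {w : ℝ → E} {w' : E} (hw : HasDerivAt w w' 0) :
    HasDerivAt (fun s => Ring.inverse (P s) (w s)) (w' - P' (w 0)) 0 := by
  have hinv : HasDerivAt (fun s => Ring.inverse (P s)) (-P') 0 := by
    have h := hasFDerivAt_ringInverse (𝕜 := ℝ) (1 : (E →L[ℝ] E)ˣ)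
    rw [Units.val_one, ← hP0] at h
    have h2 := h.comp_hasDerivAt 0 hP
    simp only [inv_one, Units.val_one, neg_apply,
      ContinuousLinearMap.mulLeftRight_apply, one_mul, mul_one] at h2
    exact h2
  convert hinv.clm_apply hw using 1
  simp [hP0, sub_eq_neg_add]

theorem hasFDerivAt_flow_neg_of_variational {v : E → E} {Ω : Set E} (hΩ : IsOpen Ω)
    (hv : ContDiffOn ℝ 1 v Ω) {φ : ℝ → E → E} {x : E} {s : ℝ}
    (hφ : ∀ᶠ z in 𝓝 (φ s x), φ 0 z = z ∧
      ∀ r ∈ uIcc 0 (-s), HasDerivAt (fun τ => φ τ z) (v (φ r z)) r)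
    (hφφ : ∀ r ∈ uIcc 0 (-s), φ r (φ s x) = φ (s + r) x) (hφΩ : ∀ r ∈ uIcc s 0, φ r x ∈ Ω)
    {P : ℝ → E →L[ℝ] E} (hP0 : P 0 = 1)
    (hP : ∀ r ∈ uIcc s 0, HasDerivAt P ((fderiv ℝ v (φ r x)).comp (P r)) r) (hs : IsUnit (P s)) :
    HasFDerivAt (φ (-s)) (Ring.inverse (P s)) (φ s x) := by
  have hshift : ∀ r ∈ uIcc 0 (-s), s + r ∈ uIcc s 0 := fun r hr => by
    have := mem_image_of_mem (s + ·) hr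
    rwa [image_const_add_uIcc, add_zero, add_neg_cancel] at this
  have := hasFDerivAt_flow_of_variational hΩ hv (Φ := φ) (u := -s)
    (W := fun r => P (s + r) * Ring.inverse (P s)) hφ
    (fun r hr => hφφ r hr ▸ hφΩ _ (hshift r hr)) (by simp [Ring.mul_inverse_cancel _ hs])
    fun r hr => ?_
  · simpa [hP0] using this
  refine (((hP _ (hshift r hr)).comp_const_add s r).mul_const (Ring.inverse (P s))).congr_deriv ?_
  rw [hφφ r hr, ContinuousLinearMap.mul_def, ContinuousLinearMap.mul_def,
    ContinuousLinearMap.comp_assoc]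

theorem exists_eventually_hasFDerivAt_flow_neg [CompleteSpace E] {v : E → E} {D : Set (ℝ × E)}
    {φ : ℝ → E → E} (hD : IsOpen D)
    (hφ : ∀ r z, (r, z) ∈ D → HasDerivAt (fun τ => φ τ z) (v (φ r z)) r)
    (hφ0 : ∀ z, φ 0 z = z)
    (hφφ : ∀ s r z, (r, z) ∈ D → (s, φ r z) ∈ D → φ s (φ r z) = φ (s + r) z)
    {x : E} (hx : (0, x) ∈ D) (hv : ContDiffAt ℝ 1 v x) :
    ∃ P : ℝ → E →L[ℝ] E, P 0 = 1 ∧ HasDerivAt P (fderiv ℝ v x) 0 ∧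
      ∀ᶠ s in 𝓝 0, HasFDerivAt (φ (-s)) (Ring.inverse (P s)) (φ s x) := by
  obtain ⟨ρ, hρ, hρD⟩ := Metric.isOpen_iff.1 hD _ hx
  have hmemD : ∀ r z, |r| < ρ → dist z x < ρ → (r, z) ∈ D := fun r z hr hz =>
    hρD (by rw [mem_ball, Prod.dist_eq, Real.dist_eq, sub_zero]; exact max_lt hr hz)
  have hY : ∀ r, |r| < ρ → HasDerivAt (φ · x) (v (φ r x)) r := fun r hr =>
    hφ r x (hmemD r x hr (by simpa using hρ))
  obtain ⟨Ω₀, hΩ₀, hvΩ₀⟩ := hv.contDiffOn le_rfl (by simp)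
  set Ω := interior Ω₀ ∩ ball x ρ
  have hvΩ : ContDiffOn ℝ 1 v Ω := hvΩ₀.mono (inter_subset_left.trans interior_subset)
  have hΩx : Ω ∈ 𝓝 (φ 0 x) := by
    rw [hφ0]; exact inter_mem (interior_mem_nhds.2 hΩ₀) (ball_mem_nhds x hρ)
  obtain ⟨ε₀, hε₀, hYε₀⟩ :=
    Metric.eventually_nhds_iff.1 ((hY 0 (by simpa)).continuousAt.eventually hΩx)
  set ε := min (ε₀ / 2) (ρ / 2)
  have hε : 0 < ε := by positivity
  have hYε : ∀ r, |r| ≤ ε → |r| < ρ ∧ φ r x ∈ Ω := fun r hr =>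
    ⟨hr.trans_lt ((min_le_right _ _).trans_lt (half_lt_self hρ)), hYε₀ <| by
      rw [Real.dist_eq, sub_zero]
      exact hr.trans_lt ((min_le_left _ _).trans_lt (half_lt_self hε₀))⟩
  have hG : ContinuousOn (fun r => fderiv ℝ v (φ r x)) (Icc (-ε) ε) :=
    (hvΩ.continuousOn_fderiv_of_isOpen (isOpen_interior.inter isOpen_ball) le_rfl).comp
      (fun r hr => (hY r (hYε r (abs_le.2 hr)).1).continuousAt.continuousWithinAt)
      fun r hr => (hYε r (abs_le.2 hr)).2
  obtain ⟨ε', hε', P, hP0, hP⟩ := exists_hasDerivAt_clm_comp_of_continuousOn hε hG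
  have hP0' := hP 0 ⟨by linarith, hε'⟩
  refine ⟨P, hP0, by simpa [hP0, hφ0, ContinuousLinearMap.one_def] using hP0', ?_⟩
  filter_upwards [hP0'.continuousAt.eventually (Units.isOpen.mem_nhds (hP0 ▸ isUnit_one)),
    ball_mem_nhds (0 : ℝ) (lt_min hε hε')] with s hs hsmall
  rw [mem_ball, Real.dist_eq, sub_zero, lt_min_iff] at hsmall
  have hsε := hYε s hsmall.1.le
  have hforward : ∀ r ∈ uIcc 0 (-s), |r| < ρ := fun r hr =>
    (by simpa using abs_sub_left_of_mem_uIcc hr : |r| ≤ |s|).trans_lt hsε.1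
  have hback : ∀ r ∈ uIcc s 0, |r| ≤ |s| := fun r hr => by
    simpa using abs_sub_right_of_mem_uIcc hr
  refine hasFDerivAt_flow_neg_of_variational (isOpen_interior.inter isOpen_ball) hvΩ ?_
    (fun r hr => ?_) (fun r hr => (hYε r ((hback r hr).trans hsmall.1.le)).2) hP0
    (fun r hr => hP r (abs_lt.1 ((hback r hr).trans_lt hsmall.2))) hs
  · filter_upwards [isOpen_ball.mem_nhds hsε.2.2] with z hz
    exact ⟨hφ0 z, fun r hr => hφ r z (hmemD r z (hforward r hr) hz)⟩
  · rw [hφφ r s x (hmemD s x hsε.1 (by simpa using hρ)) (hmemD r _ (hforward r hr) hsε.2.2),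
      add_comm]

theorem hasDerivAt_fderiv_flow_neg_apply [CompleteSpace E] {v : E → E} {D : Set (ℝ × E)}
    {φ : ℝ → E → E} (hD : IsOpen D)
    (hφ : ∀ r z, (r, z) ∈ D → HasDerivAt (fun τ => φ τ z) (v (φ r z)) r)
    (hφ0 : ∀ z, φ 0 z = z)
    (hφφ : ∀ s r z, (r, z) ∈ D → (s, φ r z) ∈ D → φ s (φ r z) = φ (s + r) z)
    {x : E} (hx : (0, x) ∈ D) (hv : ContDiffAt ℝ 1 v x) {w : ℝ → E} {w' : E}
    (hw : HasDerivAt w w' 0) :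
    HasDerivAt (fun s => fderiv ℝ (φ (-s)) (φ s x) (w s)) (w' - fderiv ℝ v x (w 0)) 0 := by
  obtain ⟨P, hP0, hP, hflow⟩ := exists_eventually_hasFDerivAt_flow_neg hD hφ hφ0 hφφ hx hv
  refine (hasDerivAt_ringInverse_apply hP hP0 hw).congr_of_eventuallyEq ?_
  filter_upwards [hflow] with s hs
  rw [hs.fderiv]

end FlowDerivative

namespace PoissonPaper

theorem sharp_add_smul {n : ℕ} (Pb : Vec n → Fin n → Fin n → ℝ) (x ξ θ : Vec n) (τ : ℝ) :
    sharp Pb x (ξ + τ • θ) = sharp Pb x ξ + τ • sharp Pb x θ := by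
  funext q
  simp only [sharp, Pi.add_apply, Pi.smul_apply, smul_eq_mul, Finset.mul_sum,
    ← Finset.sum_add_distrib]
  exact Finset.sum_congr rfl fun p _ => by ring

theorem IsSpray.fderiv_apply_vertical_fst {n : ℕ} {U : Set (Vec n)}
    {Pb : Vec n → Fin n → Fin n → ℝ} {V : Pt n → Pt n} (hV : IsSpray U Pb V) (hU : IsOpen U)
    {x : Pt n} (hx : x.1 ∈ U) (θ : Vec n) :
    (fderiv ℝ V x ((0 : Vec n), θ)).1 = sharp Pb x.1 θ := by
  set k : Pt n := ((0 : Vec n), θ)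
  have hVx : HasFDerivAt V (fderiv ℝ V x) x :=
    ((hV.smooth.contDiffAt (prod_mem_nhds (hU.mem_nhds hx) Filter.univ_mem)).differentiableAt
      (by simp)).hasFDerivAt
  have hline : HasDerivAt (fun τ : ℝ => x + τ • k) k 0 := by
    simpa using ((hasDerivAt_id (0 : ℝ)).smul_const k).const_add x
  have hderiv : HasDerivAt (fun τ : ℝ => (V (x + τ • k)).1) (fderiv ℝ V x k).1 0 :=
    (ContinuousLinearMap.fst ℝ (Vec n) (Vec n)).hasFDerivAt.comp_hasDerivAt 0
      (hVx.comp_hasDerivAt_of_eq 0 hline (by simp))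
  have hbase : (fun τ : ℝ => (V (x + τ • k)).1)
      = fun τ => sharp Pb x.1 x.2 + τ • sharp Pb x.1 θ := by
    funext τ
    rw [hV.base _ (by simpa [k] using hx)]
    simpa [k] using sharp_add_smul Pb x.1 x.2 θ τ
  rw [hbase] at hderiv
  refine hderiv.unique ?_
  simpa using ((hasDerivAt_id (0 : ℝ)).smul_const (sharp Pb x.1 θ)).const_add (sharp Pb x.1 x.2)

theorem lie_derivative_of_vertical_field_general
    {n : ℕ} (U : Set (Vec n)) (hU : IsOpen U)
    (Pb : Vec n → Fin n → Fin n → ℝ)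
    (V : Pt n → Pt n) (hV : IsSpray U Pb V)
    (D : Set (ℝ × Pt n)) (φ : ℝ → Pt n → Pt n) (hφ : IsLocalFlow U V D φ)
    (ξ : Pt n) (hξ : ∀ t ∈ Icc (0:ℝ) 1, (t, ξ) ∈ D)
    (θ : ℝ → Vec n) (hθ : ∀ r, Differentiable ℝ fun s => θ s r)
    (t : ℝ) (ht : t ∈ Icc (0:ℝ) 1) :
    deriv (fun s =>
        (fderiv ℝ (φ (-s)) (φ (t + s) ξ) (((0 : Vec n), θ (t + s)) : Pt n)).1) 0
      = -sharp Pb ((φ t ξ).1) (θ t) := by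
  set x := φ t ξ
  have hx : x.1 ∈ U := hφ.invariant t ξ (hξ t ht)
  have hx0 : ((0 : ℝ), x) ∈ D := hφ.mem_zero x hx
  have hVx : ContDiffAt ℝ 1 V x :=
    (hV.smooth.contDiffAt (prod_mem_nhds (hU.mem_nhds hx) Filter.univ_mem)).of_le (by simp)
  have hw : HasDerivAt (fun s => ((0 : Vec n), θ (t + s))) ((0 : Vec n), deriv θ t) 0 :=
    (hasDerivAt_const _ _).prodMk
      (by simpa using ((differentiable_pi.2 hθ) (t + 0)).hasDerivAt.comp_const_add t 0)
  have hkey : HasDerivAt (fun s => (fderiv ℝ (φ (-s)) (φ s x) ((0 : Vec n), θ (t + s))).1)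
      (((0 : Vec n), deriv θ t) - fderiv ℝ V x ((0 : Vec n), θ (t + 0))).1 0 :=
    (ContinuousLinearMap.fst ℝ (Vec n) (Vec n)).hasFDerivAt.comp_hasDerivAt 0 <|
    hasDerivAt_fderiv_flow_neg_apply hφ.isOpen_dom hφ.hasDeriv hφ.init
      (fun s r z h₁ h₂ => (hφ.group s r z h₁ h₂).2) hx0 hVx hw
  have hflow : ∀ᶠ s in nhds (0 : ℝ), φ (t + s) ξ = φ s x := by
    filter_upwards [(Continuous.prodMk_left x).continuousAt.preimage_mem_nhds
      (hφ.isOpen_dom.mem_nhds hx0)] with s hs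
    rw [(hφ.group s t ξ (hξ t ht) hs).2, add_comm]
  rw [Filter.EventuallyEq.deriv_eq (by filter_upwards [hflow] with s hs; rw [hs]), hkey.deriv]
  simp [hV.fderiv_apply_vertical_fst hU hx]

/-- For a vertical tangent vector field along `a(t) = φ_t(ξ)` coming from a
1-form `θ` along `γ = p ∘ a` (i.e. `V(t) = (0, θ(t))` in `T_{a(t)}(T*M)`),
the projection of its Lie derivative along the spray `V_π` is
`dp(L_{V_π}(V)) = −π♯(θ)`, where
`L_{V_π}(V)(t) = d/ds|_{s=0} (dφ_{−s})_{a(s+t)}(V(s+t))`. -/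
theorem lie_derivative_of_vertical_field
    {n : ℕ} (U : Set (Vec n)) (hU : IsOpen U)
    (Pb : Vec n → Fin n → Fin n → ℝ) (hPb : IsPoissonOn U Pb)
    (V : Pt n → Pt n) (hV : IsSpray U Pb V)
    (D : Set (ℝ × Pt n)) (φ : ℝ → Pt n → Pt n) (hφ : IsLocalFlow U V D φ)
    (Γ : Vec n → Fin n → Fin n → Fin n → ℝ)
    (hΓsym : ∀ x p q r, Γ x q p r = Γ x p q r)  -- torsion-free
    (hΓ : ∀ p q r, ContDiffOn ℝ (⊤ : ℕ∞) (fun x => Γ x p q r) U)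
    (ξ : Pt n) (hξ : ∀ t ∈ Icc (0:ℝ) 1, (t, ξ) ∈ D)
    (θ : ℝ → Vec n) (hθ : ∀ r, Differentiable ℝ fun s => θ s r)
    (t : ℝ) (ht : t ∈ Icc (0:ℝ) 1) :
    deriv (fun s =>
        (fderiv ℝ (φ (-s)) (φ (t + s) ξ) (((0 : Vec n), θ (t + s)) : Pt n)).1) 0
      = -sharp Pb ((φ t ξ).1) (θ t) :=
  lie_derivative_of_vertical_field_general U hU Pb V hV D φ hφ ξ hξ θ hθ t ht

end PoissonPaper
end
end
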